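/- arXiv:1511.05462 — 5 statements merged into one kernel-verified Lean document; each statement's English description precedes it below -/
import Mathlib

section
/- Let Gen be the category whose objects are natural numbers and whose morphisms n → m are equivalence relations (split equivalences) on Fin (n+m), with composition given by taking the transitive closure of the union of relations (after appropriate relabeling) and restricting to the outer indices. Let J send a function f : Fin m → Fin n (viewed as an arrow n → m of Set_ω^op) to the equivalence relation on Fin (n+m) whose classes are {i} ∪ {j+n : f(j) = i} for i ∈ Fin n. Then J is a faithful functor from Set_ω^op to Gen. -/
/-- The split equivalence `J(f)` on `Fin (n+m)` associated to a function
`f : Fin m → Fin n` (an arrow `n → m` of `Set_ω^op`): its classes are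
`{i} ∪ {j + n : f j = i}` for `i ∈ Fin n`. -/
def Jrel {n m : ℕ} (f : Fin m → Fin n) : Setoid (Fin (n + m)) :=
  Setoid.ker (Fin.addCases (motive := fun _ => Fin n) id f)

/-- Embedding of the `n + m` positions (source and middle) into `n + m + p`. -/
def emb1 (n m p : ℕ) : Fin (n + m) → Fin (n + m + p) := Fin.castAdd p

/-- Embedding of the `m + p` positions (middle and target) into `n + m + p`. -/
def emb2 (n m p : ℕ) : Fin (m + p) → Fin (n + m + p) := fun x =>
  Fin.cast (add_assoc n m p).symm (Fin.natAdd n x)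

/-- Embedding of the outer `n + p` positions into `n + m + p`. -/
def embo (n m p : ℕ) : Fin (n + p) → Fin (n + m + p) :=
  Fin.addCases (motive := fun _ => Fin (n + m + p))
    (fun i => Fin.castAdd p (Fin.castAdd m i)) (fun j => Fin.natAdd (n + m) j)

/-- The union of `R` and `S` transferred to the `n + m + p` positions. -/
def stepRel {n m p : ℕ} (R : Setoid (Fin (n + m))) (S : Setoid (Fin (m + p)))
    (u v : Fin (n + m + p)) : Prop :=
  (∃ x y, R.r x y ∧ u = emb1 n m p x ∧ v = emb1 n m p y) ∨
  (∃ x y, S.r x y ∧ u = emb2 n m p x ∧ v = emb2 n m p y)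

/-- Composition of split equivalences in `Gen`: the equivalence generated by
the union of the two relations (transitive closure through the middle
indices), restricted to the outer indices. -/
def genComp {n m p : ℕ} (R : Setoid (Fin (n + m))) (S : Setoid (Fin (m + p))) :
    Setoid (Fin (n + p)) :=
  Setoid.comap (embo n m p) (Relation.EqvGen.setoid (stepRel R S))

section aux
variable {n m p : ℕ} (f : Fin m → Fin n) (g : Fin p → Fin m)

/-- total labelling function -/
def Phi : Fin (n + m + p) → Fin n :=
  Fin.addCases (motive := fun _ => Fin n)
    (Fin.addCases (motive := fun _ => Fin n) id f) (f ∘ g)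

lemma phi_emb1 (x : Fin (n + m)) :
    Phi f g (emb1 n m p x) = Fin.addCases (motive := fun _ => Fin n) id f x := by
  simp [Phi, emb1, Fin.addCases_left]

lemma emb2_left (j : Fin m) :
    emb2 n m p (Fin.castAdd p j) = Fin.castAdd p (Fin.natAdd n j) := by
  simp [emb2, Fin.ext_iff]

lemma emb2_right (k : Fin p) :
    emb2 n m p (Fin.natAdd m k) = Fin.natAdd (n + m) k := by
  simp [emb2, Fin.ext_iff, add_assoc]

lemma phi_emb2 (x : Fin (m + p)) :
    Phi f g (emb2 n m p x) = f (Fin.addCases (motive := fun _ => Fin m) id g x) := by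
  induction x using Fin.addCases with
  | left j => rw [emb2_left]; simp [Phi, Fin.addCases_left, Fin.addCases_right]
  | right k => rw [emb2_right]; simp [Phi, Fin.addCases_right]

lemma phi_embo (u : Fin (n + p)) :
    Phi f g (embo n m p u) = Fin.addCases (motive := fun _ => Fin n) id (f ∘ g) u := by
  induction u using Fin.addCases with
  | left i => simp [Phi, embo, Fin.addCases_left]
  | right j => simp [Phi, embo, Fin.addCases_right]

lemma step_phi {u v : Fin (n + m + p)} (h : stepRel (Jrel f) (Jrel g) u v) :
    Phi f g u = Phi f g v := by
  rcases h with ⟨x, y, hxy, rfl, rfl⟩ | ⟨x, y, hxy, rfl, rfl⟩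
  · rw [phi_emb1, phi_emb1]; exact hxy
  · rw [phi_emb2, phi_emb2]; exact congrArg f hxy

lemma chain (j : Fin p) :
    Relation.EqvGen (stepRel (Jrel f) (Jrel g))
      (embo n m p (Fin.natAdd n j)) (embo n m p (Fin.castAdd p (f (g j)))) := by
  have h1 : stepRel (Jrel f) (Jrel g)
      (embo n m p (Fin.natAdd n j)) (emb2 n m p (Fin.castAdd p (g j))) := by
    refine Or.inr ⟨Fin.natAdd m j, Fin.castAdd p (g j), ?_, ?_, rfl⟩
    · show Fin.addCases (motive := fun _ => Fin m) id g _ = Fin.addCases (motive := fun _ => Fin m) id g _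
      simp [Fin.addCases_left, Fin.addCases_right]
    · rw [emb2_right]; simp [embo, Fin.addCases_right]
  have h2 : stepRel (Jrel f) (Jrel g)
      (emb2 n m p (Fin.castAdd p (g j))) (embo n m p (Fin.castAdd p (f (g j)))) := by
    refine Or.inl ⟨Fin.natAdd n (g j), Fin.castAdd m (f (g j)), ?_, ?_, ?_⟩
    · show Fin.addCases (motive := fun _ => Fin n) id f _ = Fin.addCases (motive := fun _ => Fin n) id f _
      simp [Fin.addCases_left, Fin.addCases_right]
    · rw [emb2_left]; rfl
    · simp [embo, emb1, Fin.addCases_left]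
  exact (Relation.EqvGen.rel _ _ h1).trans _ _ _ (Relation.EqvGen.rel _ _ h2)

lemma comp_eq : Jrel (f ∘ g) = genComp (Jrel f) (Jrel g) := by
  refine Setoid.ext fun u v => ?_
  constructor
  · intro h
    show Relation.EqvGen _ _ _
    have h' : Fin.addCases (motive := fun _ => Fin n) id (f ∘ g) u
        = Fin.addCases (motive := fun _ => Fin n) id (f ∘ g) v := h
    clear h
    induction u using Fin.addCases with
    | left i =>
      induction v using Fin.addCases with
      | left i' =>
        simp [Fin.addCases_left] at h'
        rw [h']; exact Relation.EqvGen.refl _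
      | right j =>
        simp [Fin.addCases_left, Fin.addCases_right] at h'
        rw [h']
        exact ((chain f g j).symm _ _)
    | right j =>
      induction v using Fin.addCases with
      | left i' =>
        simp [Fin.addCases_left, Fin.addCases_right] at h'
        rw [← h']
        exact chain f g j
      | right j' =>
        simp [Fin.addCases_right] at h'
        have := (chain f g j).trans _ _ _ ((h' ▸ chain f g j').symm _ _)
        exact this
  · intro h
    have h' : Phi f g (embo n m p u) = Phi f g (embo n m p v) := by
      have h : Relation.EqvGen (stepRel (Jrel f) (Jrel g)) (embo n m p u) (embo n m p v) := h
      generalize embo n m p u = a, embo n m p v = b at h ⊢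
      induction h with
      | rel a b hab => exact step_phi f g hab
      | refl a => rfl
      | symm a b _ ih => exact ih.symm
      | trans a b c _ _ ih1 ih2 => exact ih1.trans ih2
    rw [phi_embo, phi_embo] at h'
    exact h'

end aux

/-- `J` is a faithful functor from `Set_ω^op` to `Gen`: it sends identities to
the identity split equivalences (classes `{i, i+n}`), composition in
`Set_ω^op` to composition of split equivalences, and is injective on arrows. -/
theorem stmt7 :
    (∀ n : ℕ, Jrel (id : Fin n → Fin n) =
        Setoid.ker (Fin.addCases (motive := fun _ => Fin n) id id)) ∧
    (∀ (n m p : ℕ) (f : Fin m → Fin n) (g : Fin p → Fin m),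
        Jrel (f ∘ g) = genComp (Jrel f) (Jrel g)) ∧
    (∀ (n m : ℕ) (f g : Fin m → Fin n), Jrel f = Jrel g → f = g) := by
  refine ⟨fun n => rfl, fun n m p f g => comp_eq f g, fun n m f g h => ?_⟩
  funext j
  have hf : (Jrel f).r (Fin.castAdd m (f j)) (Fin.natAdd n j) := by
    show Fin.addCases (motive := fun _ => Fin n) id f _ = Fin.addCases (motive := fun _ => Fin n) id f _
    simp [Fin.addCases_left, Fin.addCases_right]
  rw [h] at hf
  have : Fin.addCases (motive := fun _ => Fin n) id g (Fin.castAdd m (f j))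
      = Fin.addCases (motive := fun _ => Fin n) id g (Fin.natAdd n j) := hf
  simpa [Fin.addCases_left, Fin.addCases_right] using this
end

section
/- Let R be an equivalence relation on Fin (n+m) and let a₀,...,a_{n-1}, b₀,...,b_{m-1} be natural numbers ≥ 2 that are appropriate for R (equivalent indices have equal associated numbers). Define F_ab(R) ⊆ Fin(a₀···a_{n-1}) × Fin(b₀···b_{m-1}) to consist of pairs (i,j) such that, writing the mixed-radix digit expansions of i and j and concatenating them into a tuple c of length n+m, we have c_x = c_y whenever (x,y) ∈ R. If R = J(f) for some function f : Fin m → Fin n (i.e. R has classes {i} ∪ {j+n : f(j)=i}), then F_ab(R) is a function from Fin(a₀···a_{n-1}) to Fin(b₀···b_{m-1}). -/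
/-- The weight of position `x` for radices `r`: the product of the radices at
positions after `x`. -/
def wgt {k : ℕ} (r : Fin k → ℕ) (x : Fin k) : ℕ :=
  ∏ y ∈ Finset.univ.filter (fun y => x < y), r y

/-- Mixed-radix encoding: `enc r c = Σ_x c x · ∏_{y > x} r y`. -/
def enc {k : ℕ} (r c : Fin k → ℕ) : ℕ := ∑ x, c x * wgt r x

/-- The Brauerian representation `F_ab(R)` of an equivalence relation `R` on
`Fin (n+m)` with radices `r` : the relation consisting of the pairs `(i,j)`
such that the concatenation `c` of the mixed-radix digit expansions of `i`
(first `n` radices) and `j` (last `m` radices) satisfies `c x = c y` whenever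
`(x,y) ∈ R`. -/
def Fab (n m : ℕ) (r : Fin (n + m) → ℕ) (R : Setoid (Fin (n + m))) :
    ℕ → ℕ → Prop := fun i j =>
  ∃ c : Fin (n + m) → ℕ,
    (∀ x, c x < r x) ∧
    (∀ x y, R.r x y → c x = c y) ∧
    i = enc (fun x : Fin n => r (Fin.castAdd m x)) (fun x => c (Fin.castAdd m x)) ∧
    j = enc (fun x : Fin m => r (Fin.natAdd n x)) (fun x => c (Fin.natAdd n x))

lemma wgt_succ {k : ℕ} (r : Fin (k+1) → ℕ) (x : Fin k) :
    wgt r x.succ = wgt (fun y : Fin k => r y.succ) x := by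
  unfold wgt
  rw [Finset.prod_filter, Finset.prod_filter, Fin.prod_univ_succ]
  simp [Fin.succ_lt_succ_iff]

lemma wgt_zero {k : ℕ} (r : Fin (k+1) → ℕ) :
    wgt r 0 = ∏ y : Fin k, r y.succ := by
  unfold wgt
  rw [Finset.prod_filter, Fin.prod_univ_succ]
  simp [Fin.succ_pos]

lemma enc_succ {k : ℕ} (r c : Fin (k+1) → ℕ) :
    enc r c = c 0 * ∏ y : Fin k, r y.succ
      + enc (fun y : Fin k => r y.succ) (fun y => c y.succ) := by
  unfold enc
  rw [Fin.sum_univ_succ, wgt_zero]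
  congr 1
  exact Finset.sum_congr rfl fun x _ => by rw [wgt_succ]

lemma enc_lt : ∀ {k : ℕ} (r c : Fin k → ℕ), (∀ x, c x < r x) → enc r c < ∏ x, r x := by
  intro k
  induction k with
  | zero => intro r c _; simp [enc]
  | succ k ih =>
    intro r c h
    rw [enc_succ, Fin.prod_univ_succ]
    have h1 := ih (fun y : Fin k => r y.succ) (fun y => c y.succ) (fun x => h x.succ)
    have h0 := h 0
    set P := ∏ y : Fin k, r y.succ
    calc c 0 * P + enc (fun y : Fin k => r y.succ) (fun y => c y.succ)
        < c 0 * P + P := by omega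
      _ = (c 0 + 1) * P := by ring
      _ ≤ r 0 * P := Nat.mul_le_mul_right _ h0

lemma split_unique {P a b e e' : ℕ} (hP : 0 < P) (he : e < P) (he' : e' < P)
    (h : P * a + e = P * b + e') : a = b ∧ e = e' := by
  have ha : (P * a + e) / P = a := by
    rw [Nat.mul_add_div hP, Nat.div_eq_of_lt he, Nat.add_zero]
  have hb : (P * b + e') / P = b := by
    rw [Nat.mul_add_div hP, Nat.div_eq_of_lt he', Nat.add_zero]
  have hab : a = b := by rw [← ha, h, hb]
  subst hab
  exact ⟨rfl, Nat.add_left_cancel h⟩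

lemma enc_inj : ∀ {k : ℕ} (r c c' : Fin k → ℕ), (∀ x, c x < r x) → (∀ x, c' x < r x) →
    enc r c = enc r c' → c = c' := by
  intro k
  induction k with
  | zero => intro r c c' _ _ _; funext x; exact x.elim0
  | succ k ih =>
    intro r c c' h h' heq
    rw [enc_succ, enc_succ] at heq
    set P := ∏ y : Fin k, r y.succ with hPdef
    have hP : 0 < P := Finset.prod_pos (fun y _ => lt_of_le_of_lt (Nat.zero_le _) (h y.succ))
    have he := enc_lt (fun y : Fin k => r y.succ) (fun y => c y.succ) (fun x => h x.succ)
    have he' := enc_lt (fun y : Fin k => r y.succ) (fun y => c' y.succ) (fun x => h' x.succ)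
    rw [Nat.mul_comm (c 0) P, Nat.mul_comm (c' 0) P] at heq
    obtain ⟨h0, htail⟩ := split_unique hP he he' heq
    have := ih (fun y : Fin k => r y.succ) (fun y => c y.succ) (fun y => c' y.succ)
      (fun x => h x.succ) (fun x => h' x.succ) htail
    funext x
    refine Fin.cases h0 (fun y => ?_) x
    exact congrFun this y

lemma enc_surj : ∀ {k : ℕ} (r : Fin k → ℕ) (i : ℕ), i < ∏ x, r x →
    ∃ c, (∀ x, c x < r x) ∧ enc r c = i := by
  intro k
  induction k with
  | zero =>
    intro r i hi
    simp only [Finset.univ_eq_empty, Finset.prod_empty, Nat.lt_one_iff] at hi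
    exact ⟨fun x => 0, fun x => x.elim0, by simp [enc, hi]⟩
  | succ k ih =>
    intro r i hi
    rw [Fin.prod_univ_succ] at hi
    set P := ∏ y : Fin k, r y.succ with hPdef
    have hP : 0 < P := by
      rcases Nat.eq_zero_or_pos P with h | h
      · rw [h, Nat.mul_zero] at hi; omega
      · exact h
    have hq : i / P < r 0 := (Nat.div_lt_iff_lt_mul hP).mpr hi
    obtain ⟨c', hc', henc⟩ := ih (fun y : Fin k => r y.succ) (i % P) (Nat.mod_lt _ hP)
    refine ⟨fun x => Fin.cases (i / P) c' x, fun x => ?_, ?_⟩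
    · refine Fin.cases hq (fun y => hc' y) x
    · rw [enc_succ]
      simp only [Fin.cases_zero, Fin.cases_succ]
      rw [henc, Nat.mul_comm]
      exact Nat.div_add_mod i P

/-- If `R = J(f)` and the radices `r` (all `≥ 2`) are appropriate for `R`,
then `F_ab(R)` is a function from `Fin (a₀⋯a_{n-1})` to `Fin (b₀⋯b_{m-1})`. -/
theorem stmt8 {n m : ℕ} (f : Fin m → Fin n) (r : Fin (n + m) → ℕ)
    (hr : ∀ x, 2 ≤ r x)
    (happ : ∀ x y, (Jrel f).r x y → r x = r y) :
    (∀ i, i < (∏ x : Fin n, r (Fin.castAdd m x)) →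
      ∃! j, Fab n m r (Jrel f) i j) ∧
    (∀ i j, Fab n m r (Jrel f) i j →
      i < (∏ x : Fin n, r (Fin.castAdd m x)) ∧
      j < (∏ x : Fin m, r (Fin.natAdd n x))) := by
  set g : Fin (n + m) → Fin n := Fin.addCases (motive := fun _ => Fin n) id f with hg
  have hJ : ∀ x y, (Jrel f).r x y ↔ g x = g y := fun x y => Iff.rfl
  have hgcast : ∀ x : Fin n, g (Fin.castAdd m x) = x := fun x => Fin.addCases_left x
  have hgnat : ∀ x : Fin m, g (Fin.natAdd n x) = f x := fun x => Fin.addCases_right x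
  have hrel : ∀ x : Fin (n + m), (Jrel f).r x (Fin.castAdd m (g x)) := by
    intro x
    rw [hJ, hgcast]
  constructor
  · intro i hi
    obtain ⟨d, hd, hdenc⟩ := enc_surj (fun x : Fin n => r (Fin.castAdd m x)) i hi
    set c : Fin (n + m) → ℕ := fun x => d (g x) with hc
    have hcb : ∀ x, c x < r x := by
      intro x
      have := happ _ _ (hrel x)
      rw [this]
      exact hd (g x)
    have hcR : ∀ x y, (Jrel f).r x y → c x = c y := by
      intro x y hxy
      simp only [hc]
      rw [(hJ x y).mp hxy]
    have hccast : (fun x : Fin n => c (Fin.castAdd m x)) = d := by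
      funext x; simp only [hc, hgcast]
    refine ⟨enc (fun x : Fin m => r (Fin.natAdd n x)) (fun x => c (Fin.natAdd n x)),
      ⟨c, hcb, hcR, by rw [hccast, hdenc], rfl⟩, ?_⟩
    rintro j' ⟨c', hcb', hcR', hi', hj'⟩
    have hc'cast : (fun x : Fin n => c' (Fin.castAdd m x)) = d := by
      apply enc_inj (fun x : Fin n => r (Fin.castAdd m x))
      · intro x; exact hcb' (Fin.castAdd m x)
      · intro x; exact hd x
      · rw [← hi', hdenc]
    have hct : ∀ x : Fin m, c' (Fin.natAdd n x) = c (Fin.natAdd n x) := by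
      intro x
      have h1 : (Jrel f).r (Fin.natAdd n x) (Fin.castAdd m (f x)) := by
        rw [hJ, hgnat, hgcast]
      have := hcR' _ _ h1
      rw [this]
      have := congrFun hc'cast (f x)
      rw [this]
      simp only [hc, hgnat]
    rw [hj']
    congr 1
    funext x
    exact hct x
  · rintro i j ⟨c, hcb, _, hi, hj⟩
    constructor
    · rw [hi]
      exact enc_lt _ _ fun x => hcb (Fin.castAdd m x)
    · rw [hj]
      exact enc_lt _ _ fun x => hcb (Fin.natAdd n x)
end

section
/- For equivalence relations R, S on Fin (n+m): if F_2(R) = F_2(S) then R = S, where F_2(R) ⊆ Fin(2ⁿ) × Fin(2ᵐ) consists of pairs (i,j) such that the concatenation c of the binary digit expansions (length n and m respectively) of i and j satisfies c_x = c_y for all (x,y) ∈ R. -/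
lemma wgt2 {k : ℕ} (x : Fin k) : wgt (fun _ => 2) x = 2 ^ (k - 1 - x.val) := by
  rw [wgt, Finset.prod_const]
  congr 1
  rw [show Finset.univ.filter (fun y => x < y) = Finset.Ioi x by ext; simp, Fin.card_Ioi]

lemma enc2_succ {k : ℕ} (c : Fin (k+1) → ℕ) :
    enc (fun _ => 2) c = c 0 * 2 ^ k + enc (fun _ => 2) (fun x => c x.succ) := by
  rw [enc, Fin.sum_univ_succ]
  congr 1
  · rw [wgt2]
    norm_num
  · rw [enc]
    apply Finset.sum_congr rfl
    intro x _
    rw [wgt2, wgt2]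
    have : (k + 1) - 1 - (Fin.succ x).val = k - 1 - x.val := by
      have := x.2; simp [Fin.val_succ]; omega
    rw [this]

lemma enc2_lt {k : ℕ} (c : Fin k → ℕ) (hc : ∀ x, c x < 2) :
    enc (fun _ => 2) c < 2 ^ k := by
  induction k with
  | zero => simp [enc]
  | succ k ih =>
    rw [enc2_succ]
    have h1 := ih (fun x => c x.succ) (fun x => hc _)
    have h2 := hc 0
    have : c 0 * 2 ^ k ≤ 2 ^ k := by
      calc c 0 * 2 ^ k ≤ 1 * 2 ^ k := Nat.mul_le_mul_right _ (by omega)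
      _ = 2 ^ k := one_mul _
    calc c 0 * 2 ^ k + enc (fun _ => 2) (fun x => c x.succ) < 2 ^ k + 2 ^ k := by omega
    _ = 2 ^ (k+1) := by ring

lemma enc2_inj {k : ℕ} (c d : Fin k → ℕ) (hc : ∀ x, c x < 2) (hd : ∀ x, d x < 2)
    (h : enc (fun _ => 2) c = enc (fun _ => 2) d) : c = d := by
  induction k with
  | zero => funext x; exact absurd x.2 (by omega)
  | succ k ih =>
    rw [enc2_succ, enc2_succ] at h
    have h1 := enc2_lt (fun x => c x.succ) (fun x => hc _)
    have h2 := enc2_lt (fun x => d x.succ) (fun x => hd _)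
    have hc0 := hc 0
    have hd0 := hd 0
    have h0 : c 0 = d 0 := by
      rcases (by omega : c 0 = 0 ∨ c 0 = 1) with e | e <;>
      rcases (by omega : d 0 = 0 ∨ d 0 = 1) with e' | e' <;>
      rw [e, e'] at h ⊢ <;> omega
    have htail : (fun x : Fin k => c x.succ) = (fun x => d x.succ) := by
      apply ih _ _ (fun x => hc _) (fun x => hd _)
      rw [h0] at h; omega
    funext x
    refine Fin.cases h0 (fun i => congrFun htail i) x

lemma key {n m : ℕ} (R S : Setoid (Fin (n + m)))
    (h : Fab n m (fun _ => 2) S = Fab n m (fun _ => 2) R)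
    {x y : Fin (n + m)} (hxy : R.r x y) : S.r x y := by
  classical
  set c : Fin (n + m) → ℕ := fun z => if S.r x z then 1 else 0 with hcdef
  have hc2 : ∀ z, c z < 2 := fun z => by dsimp [c]; split <;> omega
  have hcresp : ∀ a b, S.r a b → c a = c b := by
    intro a b hab; dsimp [c]
    by_cases hxa : S.r x a
    · rw [if_pos hxa, if_pos (show S.r x b from S.trans hxa hab)]
    · rw [if_neg hxa, if_neg (show ¬ S.r x b from fun hxb => hxa (S.trans hxb (S.symm hab)))]
  have hFS : Fab n m (fun _ => 2) S
      (enc (fun _ => 2) (fun z => c (Fin.castAdd m z)))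
      (enc (fun _ => 2) (fun z => c (Fin.natAdd n z))) :=
    ⟨c, hc2, hcresp, rfl, rfl⟩
  obtain ⟨c', hc'2, hc'resp, hi, hj⟩ := h ▸ hFS
  have e1 : (fun z : Fin n => c (Fin.castAdd m z)) = fun z => c' (Fin.castAdd m z) :=
    enc2_inj _ _ (fun z => hc2 _) (fun z => hc'2 _) hi
  have e2 : (fun z : Fin m => c (Fin.natAdd n z)) = fun z => c' (Fin.natAdd n z) :=
    enc2_inj _ _ (fun z => hc2 _) (fun z => hc'2 _) hj
  have hcc' : ∀ z, c z = c' z := fun z =>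
    Fin.addCases (fun i => congrFun e1 i) (fun j => congrFun e2 j) z
  have hxy' : c x = c y := by rw [hcc' x, hcc' y]; exact hc'resp x y hxy
  dsimp [c] at hxy'
  rw [if_pos (show S.r x x from S.refl x)] at hxy'
  by_contra hS
  rw [if_neg hS] at hxy'
  exact one_ne_zero hxy'

/-- The binary Brauerian representation `F_2` is injective on equivalence
relations: `F_2(R) = F_2(S)` implies `R = S`. -/
theorem stmt10 {n m : ℕ} (R S : Setoid (Fin (n + m)))
    (h : Fab n m (fun _ => 2) R = Fab n m (fun _ => 2) S) :
    R = S := by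
  apply Setoid.ext
  intro a b
  exact ⟨fun hab => key R S h.symm hab, fun hab => key S R h hab⟩
end

section
/- Under the Brauerian representation with appropriate radices, the image of (the split equivalence corresponding to) the first projection is the first projection: if f : Fin (n·m) → Fin n is viewed in Set_ω^op as an arrow and R = J(f^op) is the split equivalence of the first projection, then F_ab(R), for appropriate radices, equals the function i ↦ ⌊i/m⌋ (the first projection of the · product structure). Similarly, the diagonal split equivalence is mapped to the diagonal ŵ(i) = i·(n) + i. -/
/-!
A digit vector that is constant on the classes of `J(f)` is determined by its first block `d`,
the second block being `d ∘ f`. Since mixed-radix encoding is a bijection from digit vectors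
bounded by the radices onto `[0, ∏ r)`, `F_ab(J(f))` is the graph of the function
`enc d ↦ enc (d ∘ f)` on that range. For the first projection `d ∘ f` is a prefix of `d`, whose
value is the quotient by the weight of the dropped suffix; for the diagonal it is `d` written
twice, whose value is `i · A + i`.
-/

lemma wgt_castAdd {n m : ℕ} (r : Fin (n + m) → ℕ) (x : Fin n) :
    wgt r (Fin.castAdd m x) =
      wgt (fun y => r (Fin.castAdd m y)) x * ∏ y : Fin m, r (Fin.natAdd n y) := by
  simp only [wgt, Finset.prod_filter, Fin.prod_univ_add, Fin.lt_def, Fin.val_castAdd,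
    Fin.val_natAdd]
  congr 1
  exact Finset.prod_congr rfl fun y _ => if_pos (by omega)

lemma wgt_natAdd {n m : ℕ} (r : Fin (n + m) → ℕ) (x : Fin m) :
    wgt r (Fin.natAdd n x) = wgt (fun y => r (Fin.natAdd n y)) x := by
  simp only [wgt, Finset.prod_filter, Fin.prod_univ_add, Fin.lt_def, Fin.val_castAdd,
    Fin.val_natAdd, Nat.add_lt_add_iff_left]
  rw [Finset.prod_eq_one fun y _ => if_neg (by omega), one_mul]

lemma enc_eq_castAdd_mul_add_natAdd {n m : ℕ} (r c : Fin (n + m) → ℕ) :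
    enc r c =
      enc (fun y => r (Fin.castAdd m y)) (fun y => c (Fin.castAdd m y)) *
          ∏ y : Fin m, r (Fin.natAdd n y) +
        enc (fun y => r (Fin.natAdd n y)) (fun y => c (Fin.natAdd n y)) := by
  simp only [enc, Fin.sum_univ_add, wgt_castAdd, wgt_natAdd, Finset.sum_mul, mul_assoc]

lemma enc_fin_one (r c : Fin 1 → ℕ) : enc r c = c 0 := by
  simp [enc, wgt, Fin.lt_def]

lemma enc_eq_castSucc_mul_add_last {k : ℕ} (r c : Fin (k + 1) → ℕ) :
    enc r c = enc (fun y => r y.castSucc) (fun y => c y.castSucc) * r (Fin.last k) +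
      c (Fin.last k) := by
  rw [enc_eq_castAdd_mul_add_natAdd (n := k) (m := 1), enc_fin_one, Fin.prod_univ_one]
  rfl

lemma enc_lt_prod {k : ℕ} (r c : Fin k → ℕ) (hc : ∀ x, c x < r x) : enc r c < ∏ x, r x := by
  induction k with
  | zero => simp [enc]
  | succ k ih =>
    have hinit := ih _ (fun y => c y.castSucc) fun y => hc _
    have hlast := hc (Fin.last k)
    rw [enc_eq_castSucc_mul_add_last, Fin.prod_univ_castSucc]
    set e := enc (fun y => r y.castSucc) (fun y => c y.castSucc)
    calc e * r (Fin.last k) + c (Fin.last k) < (e + 1) * r (Fin.last k) := by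
          rw [add_one_mul]; omega
      _ ≤ _ := Nat.mul_le_mul_right _ hinit

lemma exists_enc_eq_of_lt_prod {k : ℕ} (r : Fin k → ℕ) {i : ℕ} (hi : i < ∏ x, r x) :
    ∃ c : Fin k → ℕ, (∀ x, c x < r x) ∧ enc r c = i := by
  induction k generalizing i with
  | zero => exact ⟨0, fun x => x.elim0, by simp_all [enc]⟩
  | succ k ih =>
    rw [Fin.prod_univ_castSucc, mul_comm] at hi
    have hlast : 0 < r (Fin.last k) := Nat.pos_of_ne_zero fun h => by simp [h] at hi
    obtain ⟨c, hc, hci⟩ := ih (fun y => r y.castSucc) (Nat.div_lt_of_lt_mul hi)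
    refine ⟨Fin.snoc c (i % r (Fin.last k)), Fin.forall_iff_castSucc.2 ⟨?_, ?_⟩, ?_⟩
    · simpa using Nat.mod_lt _ hlast
    · simpa using hc
    · simp only [enc_eq_castSucc_mul_add_last, Fin.snoc_castSucc, Fin.snoc_last, hci]
      exact Nat.div_add_mod' i _

lemma enc_div_prod_natAdd {n m : ℕ} (r c : Fin (n + m) → ℕ) (hc : ∀ x, c x < r x) :
    enc r c / ∏ y : Fin m, r (Fin.natAdd n y) =
      enc (fun y => r (Fin.castAdd m y)) (fun y => c (Fin.castAdd m y)) := by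
  have hlow := enc_lt_prod (fun y => r (Fin.natAdd n y)) (fun y => c (Fin.natAdd n y))
    fun y => hc _
  rw [enc_eq_castAdd_mul_add_natAdd, add_comm, Nat.add_mul_div_right _ _ (by omega),
    Nat.div_eq_of_lt hlow, zero_add]

lemma exists_enc_and_iff {k : ℕ} (r : Fin k → ℕ) (E : (Fin k → ℕ) → ℕ) (G : ℕ → ℕ)
    (hE : ∀ c, (∀ x, c x < r x) → E c = G (enc r c)) (i j : ℕ) :
    (∃ c, (∀ x, c x < r x) ∧ i = enc r c ∧ j = E c) ↔ i < ∏ x, r x ∧ j = G i := by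
  constructor
  · rintro ⟨c, hc, rfl, rfl⟩
    exact ⟨enc_lt_prod r c hc, hE c hc⟩
  · rintro ⟨hi, rfl⟩
    obtain ⟨c, hc, rfl⟩ := exists_enc_eq_of_lt_prod r hi
    exact ⟨c, hc, rfl, (hE c hc).symm⟩

lemma forall_jrel_imp_eq_iff {α : Type*} {n m : ℕ} (f : Fin m → Fin n) (c : Fin (n + m) → α) :
    (∀ x y, (Jrel f).r x y → c x = c y) ↔
      ∀ y, c (Fin.natAdd n y) = c (Fin.castAdd m (f y)) := by
  set g := Fin.addCases (motive := fun _ => Fin n) id f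
  constructor
  · intro h y
    exact h _ _ (show g _ = g _ by simp [g])
  · intro h x y hxy
    have hc : ∀ x, c x = c (Fin.castAdd m (g x)) :=
      Fin.forall_fin_add _ |>.2 ⟨fun x => by simp [g], fun y => by simpa [g] using h y⟩
    rw [hc x, hc y, show g x = g y from hxy]

lemma fab_jrel_iff {n m : ℕ} (r : Fin n → ℕ) (s : Fin m → ℕ) (f : Fin m → Fin n)
    (hs : ∀ y, s y = r (f y)) (i j : ℕ) :
    Fab n m (Fin.addCases (motive := fun _ => ℕ) r s) (Jrel f) i j ↔
      ∃ c, (∀ x, c x < r x) ∧ i = enc r c ∧ j = enc s (fun y => c (f y)) := by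
  simp only [Fab, forall_jrel_imp_eq_iff, Fin.addCases_left, Fin.addCases_right]
  constructor
  · rintro ⟨c, hc, hcf, hi, hj⟩
    refine ⟨_, fun x => ?_, hi, by simpa only [hcf] using hj⟩
    simpa using hc (Fin.castAdd m x)
  · rintro ⟨c, hc, hi, hj⟩
    refine ⟨Fin.addCases c (fun y => c (f y)), Fin.forall_fin_add _ |>.2 ⟨?_, fun y => ?_⟩, ?_,
      ?_, ?_⟩
    · simpa using hc
    · simpa [hs] using hc (f y)
    · simp
    · simpa using hi
    · simpa using hj

/-- The Brauerian representation maps the split equivalence of the first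
projection to the first projection `i ↦ ⌊i/B⌋` (where `B` is the product of
the radices of the second factor), and the split equivalence of the diagonal
to the diagonal `i ↦ i·A + i` (where `A` is the product of the radices). -/
theorem stmt12 :
    (∀ (n m : ℕ) (r : Fin (n + m) → ℕ), (∀ x, 2 ≤ r x) →
      ∀ i j,
        Fab (n + m) n
          (Fin.addCases (motive := fun _ => ℕ) r (fun x : Fin n => r (Fin.castAdd m x)))
          (Jrel (Fin.castAdd m : Fin n → Fin (n + m))) i j ↔
        (i < (∏ x, r x) ∧ j = i / ∏ x : Fin m, r (Fin.natAdd n x))) ∧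
    (∀ (n : ℕ) (a : Fin n → ℕ), (∀ x, 2 ≤ a x) →
      ∀ i j,
        Fab n (n + n)
          (Fin.addCases (motive := fun _ => ℕ) a
            (Fin.addCases (motive := fun _ => ℕ) a a))
          (Jrel (Fin.addCases (motive := fun _ => Fin n) id id : Fin (n + n) → Fin n)) i j ↔
        (i < (∏ x, a x) ∧ j = i * (∏ x, a x) + i)) := by
  constructor
  · intro n m r _ i j
    rw [fab_jrel_iff r _ (Fin.castAdd m) fun _ => rfl]
    exact exists_enc_and_iff r _ (· / ∏ y : Fin m, r (Fin.natAdd n y))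
      (fun c hc => (enc_div_prod_natAdd r c hc).symm) i j
  · intro n a _ i j
    have hdiag : ∀ y, Fin.addCases (motive := fun _ => ℕ) a a y =
        a (Fin.addCases (motive := fun _ => Fin n) id id y) :=
      Fin.forall_fin_add _ |>.2
        ⟨fun _ => by simp, fun _ => by simp only [Fin.addCases_right, id]⟩
    rw [fab_jrel_iff a _ _ hdiag]
    refine exists_enc_and_iff a _ (fun k => k * ∏ x, a x + k) (fun c _ => ?_) i j
    simp only [enc_eq_castAdd_mul_add_natAdd, Fin.addCases_left, Fin.addCases_right, id]
end

section
/- Let C be the free category with finite (strict monoidal) products on a countable set of generators {p₁, p₂, ...}. The functor H : C → Set_ω determined by sending pₙ to the n-th prime number and preserving the finite product structure (with product of objects given by multiplication and products of arrows defined via the lexicographic bijection) is faithful. -/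
open CategoryTheory

/-- The category `Set_ω`: objects are natural numbers, morphisms `n → m` are
functions `Fin n → Fin m`. Its finite product structure is given by
multiplication on objects, with projections `k̂¹(i) = ⌊i/m⌋`, `k̂²(i) = i mod m`
and terminal object `1`. -/
abbrev SetOmega := ℕ

instance : SmallCategory SetOmega where
  Hom n m := Fin n → Fin m
  id _ := id
  comp f g := g ∘ f

/-!
Model the free category with finite products on `α` by words in `α`: a morphism `a ⟶ b` chooses,
for each letter of `b`, an equally labelled letter of `a` to project onto. Interpreting a word as
the product of its letters gives, for every `q : α → E`, a product-preserving functor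
`interp q` with `(interp q).obj (of i) = q i`. Freeness of `C` yields such a `K : C ⥤ words`,
and uniqueness gives `K ⋙ interp p ≅ 𝟭 C`, so `K` is faithful, and `H ≅ K ⋙ interp prime`.
Finally `interp q` into `Set_ω` is faithful as soon as every `q i` has two elements: two different
choices of letters are separated by a tuple which is `0` at one chosen letter and `1` elsewhere.
-/

universe v u

open Limits

structure FreeFinProd (α : Type) where
  len : ℕ
  label : Fin len → α

namespace FreeFinProd

variable {α : Type}

@[ext]
structure Hom (a b : FreeFinProd α) where
  toFun : Fin b.len → Fin a.len
  label_toFun : ∀ j, a.label (toFun j) = b.label j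

instance : SmallCategory (FreeFinProd α) where
  Hom := Hom
  id a := ⟨id, fun _ => rfl⟩
  comp f g := ⟨f.toFun ∘ g.toFun, fun j => (f.label_toFun _).trans (g.label_toFun j)⟩

lemma hom_ext {a b : FreeFinProd α} {f g : a ⟶ b} (h : f.toFun = g.toFun) : f = g := Hom.ext h

@[simp] lemma id_toFun (a : FreeFinProd α) (k : Fin a.len) : (𝟙 a : a ⟶ a).toFun k = k := rfl

@[simp] lemma comp_toFun {a b c : FreeFinProd α} (f : a ⟶ b) (g : b ⟶ c) (k : Fin c.len) :
    (f ≫ g).toFun k = f.toFun (g.toFun k) := rfl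

def of (i : α) : FreeFinProd α := ⟨1, fun _ => i⟩

def empty : FreeFinProd α := ⟨0, Fin.elim0⟩

def isTerminalEmpty : IsTerminal (empty : FreeFinProd α) :=
  IsTerminal.ofUniqueHom (fun _ => ⟨Fin.elim0, fun k => k.elim0⟩)
    fun _ _ => hom_ext (funext fun k => k.elim0)

protected abbrev prod (a b : FreeFinProd α) : FreeFinProd α :=
  ⟨a.len + b.len, Fin.append a.label b.label⟩

def fst (a b : FreeFinProd α) : a.prod b ⟶ a := ⟨Fin.castAdd b.len, Fin.append_left _ _⟩

def snd (a b : FreeFinProd α) : a.prod b ⟶ b := ⟨Fin.natAdd a.len, Fin.append_right _ _⟩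

def lift {x a b : FreeFinProd α} (f : x ⟶ a) (g : x ⟶ b) : x ⟶ a.prod b where
  toFun := Fin.addCases f.toFun g.toFun
  label_toFun j := by
    induction j using Fin.addCases <;> simp [f.label_toFun, g.label_toFun]

def isLimitProdFan (a b : FreeFinProd α) : IsLimit (BinaryFan.mk (fst a b) (snd a b)) :=
  BinaryFan.isLimitMk (fun s => lift s.fst s.snd)
    (fun s => hom_ext (funext fun i => by simp [lift, fst]))
    (fun s => hom_ext (funext fun j => by simp [lift, snd]))
    (fun s m hfst hsnd => hom_ext (funext fun k => by
      induction k using Fin.addCases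
      · simp [lift, ← hfst, fst]
      · simp [lift, ← hsnd, snd]))

instance : HasFiniteProducts (FreeFinProd α) :=
  have : HasTerminal (FreeFinProd α) := isTerminalEmpty.hasTerminal
  have : ∀ {a b : FreeFinProd α}, HasLimit (pair a b) := ⟨⟨⟨_, isLimitProdFan _ _⟩⟩⟩
  have : HasBinaryProducts (FreeFinProd α) := hasBinaryProducts_of_hasLimit_pair _
  hasFiniteProducts_of_has_binary_and_terminal

section Interp

variable {E : Type u} [Category.{v} E] [HasFiniteProducts E] (q : α → E)

-- Reducible, so that `(piInterp q).obj a` is syntactically a product for `simp`.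
noncomputable abbrev piInterp : FreeFinProd α ⥤ E where
  obj a := ∏ᶜ fun k => q (a.label k)
  map f := Pi.lift fun k => Pi.π _ (f.toFun k) ≫ eqToHom (congrArg q (f.label_toFun k))
  map_id a := Pi.hom_ext _ _ fun k => by simp
  map_comp f g := Pi.hom_ext _ _ fun k => by simp

@[simp] lemma piInterp_map_π {a b : FreeFinProd α} (f : a ⟶ b) (k : Fin b.len) :
    (piInterp q).map f ≫ Pi.π _ k =
      Pi.π _ (f.toFun k) ≫ eqToHom (congrArg q (f.label_toFun k)) :=
  Pi.lift_π _ _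

noncomputable instance : PreservesLimit (Functor.empty.{0} (FreeFinProd α)) (piInterp q) :=
  preservesLimit_of_preserves_limit_cone isTerminalEmpty
    ((isLimitMapConeEmptyConeEquiv _ _).symm
      (IsTerminal.ofUniqueHom (fun _ => Pi.lift fun k => Fin.elim0 k)
        fun _ _ => Pi.hom_ext _ _ fun k => Fin.elim0 k))

noncomputable def isLimitMapProdFan (a b : FreeFinProd α) :
    IsLimit (BinaryFan.mk ((piInterp q).map (fst a b)) ((piInterp q).map (snd a b))) :=
  BinaryFan.IsLimit.mk _
    (fun {T} f g => Pi.lift fun k => Fin.addCases (motive := fun k => T ⟶ q ((a.prod b).label k))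
        (fun i => f ≫ Pi.π _ i ≫ eqToHom (by simp))
        (fun j => g ≫ Pi.π _ j ≫ eqToHom (by simp)) k)
    (fun f g => Pi.hom_ext _ _ fun i => by simp [fst])
    (fun f g => Pi.hom_ext _ _ fun j => by simp [snd])
    (fun f g m hfst hsnd => by
      refine Pi.hom_ext (f := fun k => q ((a.prod b).label k)) _ _ fun k => ?_
      induction k using Fin.addCases
      · simp [← hfst, fst]
      · simp [← hsnd, snd])

instance : PreservesFiniteProducts (piInterp q) :=
  have (a b : FreeFinProd α) : PreservesLimit (pair a b) (piInterp q) :=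
    preservesLimit_of_preserves_limit_cone (isLimitProdFan a b)
      ((isLimitMapConeBinaryFanEquiv _ _ _).symm (isLimitMapProdFan q a b))
  have : PreservesLimitsOfShape (Discrete WalkingPair) (piInterp q) :=
    ⟨fun {K} => preservesLimit_of_iso_diagram _ (diagramIsoPair K).symm⟩
  have := preservesLimitsOfShape_pempty_of_preservesTerminal (piInterp q)
  .of_preserves_binary_and_terminal _

/-- A one-letter word goes to its generator itself rather than to a one-factor product, so that
`interp q` sends `of i` to `q i` on the nose, as the freeness hypothesis demands. -/
noncomputable def interpObj : FreeFinProd α → E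
  | ⟨1, u⟩ => q (u 0)
  | a => ∏ᶜ fun k => q (a.label k)

noncomputable def piInterpObjIso : ∀ a : FreeFinProd α, (piInterp q).obj a ≅ interpObj q a
  | ⟨1, _⟩ => productUniqueIso _
  | ⟨0, _⟩ => Iso.refl _
  | ⟨_ + 2, _⟩ => Iso.refl _

noncomputable def interp : FreeFinProd α ⥤ E :=
  (piInterp q).copyObj (interpObj q) (piInterpObjIso q)

@[simp] lemma interp_obj_of (i : α) : (interp q).obj (of i) = q i := rfl

noncomputable def piInterpIsoInterp : piInterp q ≅ interp q := Functor.isoCopyObj _ _ _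

instance : PreservesFiniteProducts (interp q) :=
  ⟨fun _ => preservesLimitsOfShape_of_natIso (piInterpIsoInterp q)⟩

end Interp

end FreeFinProd

namespace SetOmega

lemma eqToHom_apply_val {n m : SetOmega} (h : n = m) (x : Fin n) :
    ((eqToHom h : Fin n → Fin m) x).val = x.val := by
  subst h; rfl

def isTerminalOne : IsTerminal (1 : SetOmega) :=
  IsTerminal.ofUniqueHom (fun _ _ => 0) fun _ _ => funext fun _ => Subsingleton.elim _ _

def prodFan (n m : SetOmega) : BinaryFan n m :=
  BinaryFan.mk (P := n * m)
    (fun z => (finProdFinEquiv.symm z).1) (fun z => (finProdFinEquiv.symm z).2)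

def isLimitProdFan (n m : SetOmega) : IsLimit (prodFan n m) :=
  BinaryFan.IsLimit.mk _ (fun f g x => finProdFinEquiv (f x, g x))
    (fun f g => funext fun x => congrArg Prod.fst (finProdFinEquiv.symm_apply_apply (f x, g x)))
    (fun f g => funext fun x => congrArg Prod.snd (finProdFinEquiv.symm_apply_apply (f x, g x)))
    (fun f g m hfst hsnd => funext fun x => finProdFinEquiv.symm.injective <| by
      rw [Equiv.symm_apply_apply]
      exact Prod.ext (congrFun hfst x) (congrFun hsnd x))

instance : HasFiniteProducts SetOmega :=
  have : HasTerminal SetOmega := isTerminalOne.hasTerminal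
  have : ∀ {n m : SetOmega}, HasLimit (pair n m) := ⟨⟨⟨_, isLimitProdFan _ _⟩⟩⟩
  have : HasBinaryProducts SetOmega := hasBinaryProducts_of_hasLimit_pair _
  hasFiniteProducts_of_has_binary_and_terminal

lemma exists_forall_π_apply_eq {ι : Type} [Finite ι] (f : ι → SetOmega) (t : ∀ k, Fin (f k)) :
    ∃ x : Fin (∏ᶜ f), ∀ k, (Pi.π f k : Fin _ → Fin _) x = t k :=
  let x : (1 : SetOmega) ⟶ ∏ᶜ f := Pi.lift fun k _ => t k
  ⟨x 0, fun k => congrFun (Pi.lift_π (C := SetOmega) (fun k _ => t k) k) 0⟩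

end SetOmega

namespace FreeFinProd

variable {α : Type}

lemma piInterp_map_apply_val (q : α → SetOmega) {a b : FreeFinProd α} (f : a ⟶ b)
    (x : Fin ((piInterp q).obj a)) (k : Fin b.len) :
    ((Pi.π (fun k => q (b.label k)) k : Fin _ → Fin _)
        (((piInterp q).map f : Fin _ → Fin _) x)).val =
      ((Pi.π (fun k => q (a.label k)) (f.toFun k) : Fin _ → Fin _) x).val :=
  (congrArg (fun φ : _ ⟶ _ => ((φ : Fin _ → Fin _) x).val) (piInterp_map_π q f k)).trans
    (SetOmega.eqToHom_apply_val (congrArg q (f.label_toFun k)) _)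

lemma faithful_piInterp (q : α → SetOmega) (hq : ∀ i, 2 ≤ q i) : (piInterp q).Faithful where
  map_injective {a b f g} hfg := hom_ext <| funext fun j => by
    by_contra hne
    obtain ⟨x, hx⟩ := SetOmega.exists_forall_π_apply_eq (fun k => q (a.label k)) fun k =>
      if k = f.toFun j then ⟨0, zero_lt_two.trans_le (hq _)⟩ else ⟨1, one_lt_two.trans_le (hq _)⟩
    have hcoord := piInterp_map_apply_val q f x j
    rw [hfg, piInterp_map_apply_val, hx, hx, if_pos rfl, if_neg (Ne.symm hne)] at hcoord
    exact one_ne_zero hcoord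

lemma faithful_interp (q : α → SetOmega) (hq : ∀ i, 2 ≤ q i) : (interp q).Faithful :=
  have := faithful_piInterp q hq
  .of_iso (piInterpIsoInterp q)

end FreeFinProd

/-- If `C` is the free category with finite products on countably many
generators `p₁, p₂, …` (freeness: for every small category `D` with finite
products and every assignment `q` of the generators there is a
finite-product-preserving functor `C ⥤ D` sending `pₙ` to `qₙ`, unique up to
natural isomorphism), then any finite-product-preserving functor
`H : C ⥤ Set_ω` sending `pₙ` to the `n`-th prime is faithful. -/
theorem stmt13 (C : Type) [SmallCategory C] [Limits.HasFiniteProducts C]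
    (p : ℕ+ → C)
    (hfree : ∀ (D : Type) [SmallCategory D] [Limits.HasFiniteProducts D]
        (q : ℕ+ → D),
      (∃ F : C ⥤ D, Nonempty (Limits.PreservesFiniteProducts F) ∧
        ∀ i, F.obj (p i) = q i) ∧
      (∀ F G : C ⥤ D,
        Limits.PreservesFiniteProducts F → Limits.PreservesFiniteProducts G →
        (∀ i, F.obj (p i) = q i) → (∀ i, G.obj (p i) = q i) →
        Nonempty (F ≅ G)))
    (H : C ⥤ SetOmega)
    (hH : Limits.PreservesFiniteProducts H)
    (hobj : ∀ i : ℕ+, H.obj (p i) = Nat.nth Nat.Prime ((i : ℕ) - 1)) :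
    H.Faithful := by
  obtain ⟨⟨K, ⟨_⟩, hK⟩, -⟩ := hfree (FreeFinProd ℕ+) FreeFinProd.of
  have : K.Faithful := by
    obtain ⟨e⟩ := (hfree C p).2 (K ⋙ FreeFinProd.interp p) (𝟭 C) inferInstance inferInstance
      (by simp [hK]) (fun _ => rfl)
    have : (K ⋙ FreeFinProd.interp p).Faithful := .of_iso e.symm
    exact .of_comp K (FreeFinProd.interp p)
  let prime (i : ℕ+) : SetOmega := Nat.nth Nat.Prime ((i : ℕ) - 1)
  have := FreeFinProd.faithful_interp prime fun _ => (Nat.prime_nth_prime _).two_le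
  obtain ⟨e⟩ := (hfree SetOmega prime).2 H (K ⋙ FreeFinProd.interp prime) hH
    inferInstance hobj (by simp [hK])
  exact .of_iso e.symm
end
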